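/- Let X : H^d → H be a row contraction and L ⊆ H a closed subspace that is invariant for each X_k* and on which X* := (X₁*,...,X_d*)ᵀ acts isometrically (Σ‖X_k* l‖² = ‖l‖² for l ∈ L). Then for every z ∈ 𝔹^d, L ⊆ ran((I - z X*)(X restricted to its initial space)), i.e., L ⊆ Ran_z(X) when X is a row partial isometry. -/

import Mathlib

open ContinuousLinearMap

set_option synthInstance.maxHeartbeats 1000000
set_option maxHeartbeats 1000000

noncomputable section

instance piLpComplete {d : ℕ} {H : Type*} [NormedAddCommGroup H]
    [InnerProductSpace ℂ H] [CompleteSpace H] :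
    CompleteSpace (PiLp 2 fun _ : Fin d => H) :=
  inferInstance

/-- The row operator `z : H^d → H`, `(h₁,...,h_d) ↦ Σ zⱼ hⱼ`, for a scalar row `z ∈ ℂ^d`. -/
def rowOp {d : ℕ} {H : Type*} [NormedAddCommGroup H] [InnerProductSpace ℂ H]
    (z : EuclideanSpace ℂ (Fin d)) : PiLp 2 (fun _ : Fin d => H) →L[ℂ] H :=
  ∑ j, z j • ((ContinuousLinearMap.proj j : (∀ _ : Fin d, H) →L[ℂ] H).comp
    (PiLp.continuousLinearEquiv 2 ℂ (fun _ : Fin d => H)).toContinuousLinearMap)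

/-- The column operator `z* : H → H^d`, `h ↦ (z̄₁ h, ..., z̄_d h)`; the adjoint of `rowOp z`. -/
def colOp {d : ℕ} {H : Type*} [NormedAddCommGroup H] [InnerProductSpace ℂ H]
    (z : EuclideanSpace ℂ (Fin d)) : H →L[ℂ] PiLp 2 (fun _ : Fin d => H) :=
  ((PiLp.continuousLinearEquiv 2 ℂ (fun _ : Fin d => H)).symm.toContinuousLinearMap).comp
    (ContinuousLinearMap.pi fun j => (starRingEnd ℂ (z j)) • ContinuousLinearMap.id ℂ H)

/-- Ampliation `A ⊗ I_d` of an operator `A : H → J` acting componentwise on columns. -/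
def liftD {d : ℕ} {H J : Type*} [NormedAddCommGroup H] [InnerProductSpace ℂ H]
    [NormedAddCommGroup J] [InnerProductSpace ℂ J] (A : H →L[ℂ] J) :
    PiLp 2 (fun _ : Fin d => H) →L[ℂ] PiLp 2 (fun _ : Fin d => J) :=
  ((PiLp.continuousLinearEquiv 2 ℂ (fun _ : Fin d => J)).symm.toContinuousLinearMap).comp <|
    (ContinuousLinearMap.pi fun j =>
      A.comp ((ContinuousLinearMap.proj j : (∀ _ : Fin d, H) →L[ℂ] H))).comp
    (PiLp.continuousLinearEquiv 2 ℂ (fun _ : Fin d => H)).toContinuousLinearMap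

/-! Since `X X*` is an orthogonal projection and `‖X* l‖ = ‖l‖`, every `l ∈ L` satisfies
`X X* l = l`. The operator `S = z X*` maps `L` into itself with norm at most `‖z‖ < 1`, so by the
Neumann series `1 - S` is invertible on the closed subspace `L`: `l = g - z X* g` with `g ∈ L`.
Then `(X - z) X* X (X* g) = X X* g - z X* g = l`. -/

theorem Submodule.exists_mem_sub_apply_eq_of_norm_le {𝕜 E : Type*} [NontriviallyNormedField 𝕜]
    [NormedAddCommGroup E] [NormedSpace 𝕜 E] [CompleteSpace E]
    {L : Submodule 𝕜 E} (hL : IsClosed (L : Set E)) {S : E →L[𝕜] E}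
    (hSL : ∀ v ∈ L, S v ∈ L) {c : ℝ} (hc0 : 0 ≤ c) (hc : c < 1)
    (hS : ∀ v ∈ L, ‖S v‖ ≤ c * ‖v‖) {l : E} (hl : l ∈ L) :
    ∃ g ∈ L, g - S g = l := by
  have : CompleteSpace L := hL.completeSpace_coe
  have hnorm : ‖S.restrict hSL‖ < 1 :=
    (opNorm_le_bound _ hc0 fun v : L => hS v v.2).trans_lt hc
  obtain ⟨T, hT⟩ := (isUnit_one_sub_of_norm_lt_one hnorm).exists_right_inv
  refine ⟨T ⟨l, hl⟩, (T ⟨l, hl⟩).2, ?_⟩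
  simpa using congr(($hT ⟨l, hl⟩ : E))

namespace ContinuousLinearMap

variable {𝕜 E F : Type*} [RCLike 𝕜] [NormedAddCommGroup E] [InnerProductSpace 𝕜 E]
  [CompleteSpace E] [NormedAddCommGroup F] [InnerProductSpace 𝕜 F] [CompleteSpace F]
  {X : E →L[𝕜] F}

theorem adjoint_apply_apply_adjoint_apply (hX : IsIdempotentElem (X ∘L adjoint X)) (v : F) :
    adjoint X (X (adjoint X v)) = adjoint X v := by
  have hw : X (adjoint X (v - X (adjoint X v))) = 0 := by
    simpa [sub_eq_zero] using congr($hX v).symm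
  have : ‖adjoint X (v - X (adjoint X v))‖ ^ 2 = 0 := by
    rw [apply_norm_sq_eq_inner_adjoint_left, adjoint_adjoint, comp_apply, hw, inner_zero_left,
      map_zero]
  rw [sq_eq_zero_iff, norm_eq_zero, map_sub, sub_eq_zero] at this
  exact this.symm

theorem norm_apply_adjoint_apply (hX : IsIdempotentElem (X ∘L adjoint X)) (v : F) :
    ‖X (adjoint X v)‖ = ‖adjoint X v‖ := by
  rw [← sq_eq_sq₀ (norm_nonneg _) (norm_nonneg _), apply_norm_sq_eq_inner_adjoint_left, comp_apply, adjoint_apply_apply_adjoint_apply hX, inner_self_eq_norm_sq]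

theorem apply_adjoint_apply_eq_self (hX : IsIdempotentElem (X ∘L adjoint X)) {v : F}
    (hv : ‖adjoint X v‖ = ‖v‖) : X (adjoint X v) = v := by
  have horth : inner 𝕜 (X (adjoint X v)) (v - X (adjoint X v)) = 0 := by
    rw [← adjoint_inner_right, map_sub, adjoint_apply_apply_adjoint_apply hX, sub_self,
      inner_zero_right]
  have hpyth := norm_add_sq_eq_norm_sq_add_norm_sq_of_inner_eq_zero _ _ horth
  rw [add_sub_cancel, norm_apply_adjoint_apply hX, hv] at hpyth
  have : ‖v - X (adjoint X v)‖ = 0 := by nlinarith [norm_nonneg (v - X (adjoint X v))]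
  rwa [norm_eq_zero, sub_eq_zero, eq_comm] at this

end ContinuousLinearMap

section rowOp

variable {d : ℕ} {H : Type*} [NormedAddCommGroup H] [InnerProductSpace ℂ H]

theorem rowOp_apply (z : EuclideanSpace ℂ (Fin d)) (v : PiLp 2 (fun _ : Fin d => H)) :
    rowOp z v = ∑ j, z j • v j := by
  simp [rowOp]

theorem norm_rowOp_apply_le (z : EuclideanSpace ℂ (Fin d)) (v : PiLp 2 (fun _ : Fin d => H)) :
    ‖rowOp z v‖ ≤ ‖z‖ * ‖v‖ :=
  calc ‖rowOp z v‖ ≤ ∑ j, ‖z j‖ * ‖v j‖ := by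
        simpa [rowOp_apply, norm_smul] using norm_sum_le _ fun j => z j • v j
    _ ≤ √(∑ j, ‖z j‖ ^ 2) * √(∑ j, ‖v j‖ ^ 2) := Real.sum_mul_le_sqrt_mul_sqrt _ _ _
    _ = ‖z‖ * ‖v‖ := by rw [EuclideanSpace.norm_eq, PiLp.norm_eq_of_L2]

theorem rowOp_apply_mem (z : EuclideanSpace ℂ (Fin d)) {L : Submodule ℂ H}
    {v : PiLp 2 (fun _ : Fin d => H)} (hv : ∀ j, v j ∈ L) : rowOp z v ∈ L := by
  rw [rowOp_apply]
  exact L.sum_mem fun j _ => L.smul_mem _ (hv j)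

end rowOp

theorem stmt_5 {d : ℕ} {H : Type*} [NormedAddCommGroup H] [InnerProductSpace ℂ H]
    [CompleteSpace H]
    (X : PiLp 2 (fun _ : Fin d => H) →L[ℂ] H)
    (hX : IsIdempotentElem (X ∘L (adjoint X)))
    (L : Submodule ℂ H) (hLc : IsClosed (L : Set H))
    (hcoinv : ∀ l ∈ L, ∀ k : Fin d, ((adjoint X) l) k ∈ L)
    (hiso : ∀ l ∈ L, ‖(adjoint X) l‖ = ‖l‖)
    (z : EuclideanSpace ℂ (Fin d)) (hz : ‖z‖ < 1) :
    L ≤ LinearMap.range (((X - rowOp z) ∘L ((adjoint X) ∘L X) :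
      PiLp 2 (fun _ : Fin d => H) →L[ℂ] H) : PiLp 2 (fun _ : Fin d => H) →ₗ[ℂ] H) := by
  intro l hl
  set S := rowOp z ∘L adjoint X
  have hSL : ∀ v ∈ L, S v ∈ L := fun v hv => rowOp_apply_mem z (hcoinv v hv)
  have hS : ∀ v ∈ L, ‖S v‖ ≤ ‖z‖ * ‖v‖ := fun v hv =>
    hiso v hv ▸ norm_rowOp_apply_le z (adjoint X v)
  obtain ⟨g, hg, rfl⟩ := L.exists_mem_sub_apply_eq_of_norm_le hLc hSL (norm_nonneg z) hz hS hl
  refine ⟨adjoint X g, ?_⟩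
  simp [S, apply_adjoint_apply_eq_self hX (hiso g hg)]

end
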